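/- Let a, b, c ∈ ℝ³ be pairwise distinct, let v_a, v_b, v_c ∈ ℝ³ and ω ∈ ℝ³. Set β_ab = (b − a)/‖b − a‖, β_ac = (c − a)/‖c − a‖, P_ab u = u − ⟨β_ab, u⟩β_ab, P_ac u = u − ⟨β_ac, u⟩β_ac. If P_ab(v_b − v_a)/‖b − a‖ = ω ×₃ β_ab and P_ac(v_c − v_a)/‖c − a‖ = ω ×₃ β_ac, then ⟨β_ac, P_ab(v_b − v_a)⟩/‖b − a‖ + ⟨β_ab, P_ac(v_c − v_a)⟩/‖c − a‖ = 0. -/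
import Mathlib


open scoped RealInnerProductSpace

noncomputable section

abbrev E3 := EuclideanSpace ℝ (Fin 3)

/-- The cross product on `ℝ³`. -/
def cross3 (x y : E3) : E3 :=
  (EuclideanSpace.equiv (Fin 3) ℝ).symm
    ![x 1 * y 2 - x 2 * y 1, x 2 * y 0 - x 0 * y 2, x 0 * y 1 - x 1 * y 0]

/-- The bearing `β_ab = (b - a)/‖b - a‖`. -/
def bearing3 (a b : E3) : E3 := ‖b - a‖⁻¹ • (b - a)

/-- Orthogonal projection `P_β u = u - ⟪β, u⟫ β` onto `span{β}ᗮ`. -/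
def proj3 (β u : E3) : E3 := u - ⟪β, u⟫ • β

lemma cross3_apply (x y : E3) :
    cross3 x y = (EuclideanSpace.equiv (Fin 3) ℝ).symm
      ![x 1 * y 2 - x 2 * y 1, x 2 * y 0 - x 0 * y 2, x 0 * y 1 - x 1 * y 0] := rfl

lemma triple_antisymm (x y z : E3) :
    ⟪y, cross3 x z⟫ + ⟪z, cross3 x y⟫ = 0 := by
  simp only [cross3, EuclideanSpace.inner_eq_star_dotProduct]
  simp [dotProduct, Fin.sum_univ_three, EuclideanSpace.equiv]
  ring

/-- If the velocities `v` together with an angular velocity `ω` annihilate the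
body-frame bearing derivatives of edges `(a,b)` and `(a,c)`, then they also annihilate
the derivative of the angle cosine `⟨β_ab, β_ac⟩`: null vectors of the bearing rigidity
matrix project to null vectors of the angle rigidity matrix. -/
theorem null_bearing_implies_null_angle
    (a b c : E3) (hab : a ≠ b) (hac : a ≠ c) (hbc : b ≠ c)
    (va vb vc ω : E3)
    (h1 : ‖b - a‖⁻¹ • proj3 (bearing3 a b) (vb - va) = cross3 ω (bearing3 a b))
    (h2 : ‖c - a‖⁻¹ • proj3 (bearing3 a c) (vc - va) = cross3 ω (bearing3 a c)) :
    ⟪bearing3 a c, proj3 (bearing3 a b) (vb - va)⟫ / ‖b - a‖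
      + ⟪bearing3 a b, proj3 (bearing3 a c) (vc - va)⟫ / ‖c - a‖ = 0 := by
  have e1 : ⟪bearing3 a c, proj3 (bearing3 a b) (vb - va)⟫ / ‖b - a‖
      = ⟪bearing3 a c, cross3 ω (bearing3 a b)⟫ := by
    rw [← h1, real_inner_smul_right]; ring
  have e2 : ⟪bearing3 a b, proj3 (bearing3 a c) (vc - va)⟫ / ‖c - a‖
      = ⟪bearing3 a b, cross3 ω (bearing3 a c)⟫ := by
    rw [← h2, real_inner_smul_right]; ring
  rw [e1, e2]
  have := triple_antisymm ω (bearing3 a c) (bearing3 a b)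
  linarith
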